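/- arXiv:1702.06103 — 2 statements merged into one kernel-verified Lean document; each statement's English description precedes it below -/
import Mathlib

section
/- Let X₁,…,Xₙ be {0,1}-valued random variables adapted to a filtration F₁,…,Fₙ (each Xᵢ may depend on the previous ones), and let E_γ be the event {for all i: E[Xᵢ | F_{i−1}] ≥ γ} for some γ > 0. Then P( (∑_{i=1}^n Xᵢ ≤ nγ/2) ∧ E_γ ) ≤ exp(−nγ/8). -/
/-!
Put `c = 1 - e⁻¹` and `mᵢ = E[Xᵢ | F_{i-1}]`. Since `Xᵢ ∈ {0, 1}`, `E[e^{-Xᵢ} | F_{i-1}] = 1 - c mᵢ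
≤ e^{-c mᵢ}`, so `Gₖ = ∏_{i ≤ k} e^{c mᵢ - Xᵢ}` is a nonnegative supermartingale with `G₀ = 1`.
On the event, `log Gₙ ≥ c nγ - nγ/2 ≥ nγ/8` because `c ≥ 5/8`, and Markov's inequality for `Gₙ`
gives the bound.
-/

open MeasureTheory Finset Real

theorem exp_mul_one_sub_le_one (x : ℝ) : exp x * (1 - x) ≤ 1 := by
  calc exp x * (1 - x) ≤ exp x * exp (-x) := by gcongr; exact one_sub_le_exp_neg x
    _ = 1 := by rw [← exp_add, add_neg_cancel, exp_zero]

theorem five_div_eight_le_one_sub_exp_neg_one : (5 / 8 : ℝ) ≤ 1 - exp (-1) := by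
  have he : (8 / 3 : ℝ) ≤ exp 1 := by linarith [exp_one_gt_d9]
  have : exp (-1) ≤ 3 / 8 := by
    rw [exp_neg, inv_le_comm₀ (exp_pos 1) (by norm_num)]
    linarith
  linarith

theorem exp_neg_of_eq_zero_or_eq_one {x : ℝ} (hx : x = 0 ∨ x = 1) :
    exp (-x) = 1 - (1 - exp (-1)) * x := by
  rcases hx with rfl | rfl <;> simp

section Supermartingale

variable {Ω : Type*} {m0 : MeasurableSpace Ω} {μ : Measure Ω} [IsFiniteMeasure μ]

theorem MeasureTheory.Supermartingale.measure_ge_le {ι : Type*} [Preorder ι] {ℱ : Filtration ι m0}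
    [SigmaFiniteFiltration μ ℱ] {f : ι → Ω → ℝ} (hf : Supermartingale f ℱ μ) {i j : ι}
    (hij : i ≤ j) (hf_nonneg : 0 ≤ᵐ[μ] f j) {ε : ℝ} (hε : 0 < ε) :
    μ {ω | ε ≤ f j ω} ≤ ENNReal.ofReal ((∫ ω, f i ω ∂μ) / ε) := by
  have hmarkov := mul_meas_ge_le_integral_of_nonneg hf_nonneg (hf.integrable j) ε
  have hmono : ∫ ω, f j ω ∂μ ≤ ∫ ω, f i ω ∂μ := by
    simpa using hf.setIntegral_le hij MeasurableSet.univ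
  rw [← ofReal_measureReal]
  exact ENNReal.ofReal_le_ofReal ((le_div_iff₀' hε).2 (hmarkov.trans hmono))

theorem condExp_exp_neg_of_eq_zero_or_eq_one {m : MeasurableSpace Ω} (hm : m ≤ m0) {Y : Ω → ℝ}
    (hY_int : Integrable Y μ) (hY : ∀ ω, Y ω = 0 ∨ Y ω = 1) :
    μ[fun ω ↦ exp (-Y ω) | m] =ᵐ[μ] fun ω ↦ 1 - (1 - exp (-1)) * μ[Y | m] ω := by
  set c := 1 - exp (-1)
  have hfun : (fun ω ↦ exp (-Y ω)) = (fun _ ↦ (1 : ℝ)) - c • Y := by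
    ext ω; simp [exp_neg_of_eq_zero_or_eq_one (hY ω), c]
  rw [hfun]
  filter_upwards [condExp_sub (m := m) (integrable_const (1 : ℝ)) (hY_int.smul c),
    condExp_smul (m := m) (μ := μ) c Y] with ω hsub hsmul
  rw [hsub, Pi.sub_apply, hsmul, condExp_const hm, Pi.smul_apply, smul_eq_mul]

variable {𝒢 : Filtration ℕ m0}

theorem supermartingale_prod_Icc {f : ℕ → Ω → ℝ} {C : ℝ} (hf_adapt : StronglyAdapted 𝒢 f)
    (hf_nonneg : ∀ i ω, 0 ≤ f i ω) (hf_bdd : ∀ i, ∀ᵐ ω ∂μ, f i ω ≤ C)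
    (hf_cond : ∀ i, μ[f (i + 1) | 𝒢 i] ≤ᵐ[μ] 1) :
    Supermartingale (fun k ω ↦ ∏ i ∈ Icc 1 k, f i ω) 𝒢 μ := by
  have hG_adapt : StronglyAdapted 𝒢 fun k ω ↦ ∏ i ∈ Icc 1 k, f i ω := fun k ↦
    Finset.stronglyMeasurable_fun_prod _ fun i hi ↦ (hf_adapt i).mono (𝒢.mono (mem_Icc.1 hi).2)
  have hbdd : ∀ k, ∀ᵐ ω ∂μ, ‖∏ i ∈ Icc 1 k, f i ω‖ ≤ C ^ k := fun k ↦ by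
    filter_upwards [ae_all_iff.2 hf_bdd] with ω hω
    rw [Real.norm_of_nonneg (prod_nonneg fun i _ ↦ hf_nonneg i ω)]
    simpa using prod_le_prod (s := Icc 1 k) (fun i _ ↦ hf_nonneg i ω) fun i _ ↦ hω i
  have hint : ∀ k, Integrable (fun ω ↦ ∏ i ∈ Icc 1 k, f i ω) μ := fun k ↦
    .of_bound ((hG_adapt k).mono (𝒢.le k)).aestronglyMeasurable _ (hbdd k)
  refine supermartingale_nat hG_adapt hint fun k ↦ ?_
  have hsucc : (fun ω ↦ ∏ i ∈ Icc 1 (k + 1), f i ω) =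
      (fun ω ↦ ∏ i ∈ Icc 1 k, f i ω) * f (k + 1) := by
    ext ω; simp [prod_Icc_succ_top (Nat.le_add_left 1 k)]
  have hf_int : Integrable (f (k + 1)) μ := by
    refine .of_bound ((hf_adapt _).mono (𝒢.le _)).aestronglyMeasurable C ?_
    filter_upwards [hf_bdd (k + 1)] with ω hω
    rwa [Real.norm_of_nonneg (hf_nonneg _ ω)]
  rw [hsucc]
  filter_upwards [condExp_mul_of_stronglyMeasurable_left (hG_adapt k) (hsucc ▸ hint (k + 1)) hf_int,
    hf_cond k] with ω hpull hle
  rw [hpull, Pi.mul_apply]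
  exact mul_le_of_le_one_right (prod_nonneg fun i _ ↦ hf_nonneg i ω) hle

theorem supermartingale_prod_exp_sub_of_eq_zero_or_eq_one {X : ℕ → Ω → ℝ}
    (hadapt : ∀ i, StronglyMeasurable[𝒢 i] (X i)) (hber : ∀ i ω, X i ω = 0 ∨ X i ω = 1) :
    Supermartingale
      (fun k ω ↦ ∏ i ∈ Icc 1 k, exp ((1 - exp (-1)) * μ[X i | 𝒢 (i - 1)] ω - X i ω)) 𝒢 μ := by
  set c := 1 - exp (-1)
  have hc : 0 ≤ c := by linarith [five_div_eight_le_one_sub_exp_neg_one]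
  have hX_abs : ∀ i ω, |X i ω| ≤ 1 := fun i ω ↦ by
    rcases hber i ω with h | h <;> simp [h]
  have hX_nonneg : ∀ i ω, 0 ≤ X i ω := fun i ω ↦ by rcases hber i ω with h | h <;> simp [h]
  have hX_int : ∀ i, Integrable (X i) μ := fun i ↦
    .of_bound ((hadapt i).mono (𝒢.le i)).aestronglyMeasurable 1 (ae_of_all _ (hX_abs i))
  have hcondExp_le : ∀ i k, ∀ᵐ ω ∂μ, μ[X i | 𝒢 k] ω ≤ 1 := fun i k ↦ by
    filter_upwards [ae_bdd_abs_condExp_of_ae_bdd_abs (m := 𝒢 k) (ae_of_all μ (hX_abs i))] with ω hω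
    exact (abs_le.1 hω).2
  have hexp_le : ∀ i, ∀ᵐ ω ∂μ, ‖exp (c * μ[X i | 𝒢 (i - 1)] ω - X i ω)‖ ≤ exp c := fun i ↦ by
    filter_upwards [hcondExp_le i (i - 1)] with ω hω
    rw [Real.norm_of_nonneg (exp_pos _).le, exp_le_exp]
    nlinarith [hX_nonneg i ω]
  have hmeas : ∀ i, StronglyMeasurable[𝒢 i] fun ω ↦ exp (c * μ[X i | 𝒢 (i - 1)] ω - X i ω) :=
    fun i ↦ continuous_exp.comp_stronglyMeasurable
      (((stronglyMeasurable_condExp.mono (𝒢.mono (Nat.sub_le i 1))).const_mul c).sub (hadapt i))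
  refine supermartingale_prod_Icc hmeas (fun i ω ↦ (exp_pos _).le)
    (fun i ↦ (hexp_le i).mono fun ω hω ↦ (le_abs_self _).trans hω) fun i ↦ ?_
  have hsplit : (fun ω ↦ exp (c * μ[X (i + 1) | 𝒢 (i + 1 - 1)] ω - X (i + 1) ω)) =
      (fun ω ↦ exp (c * μ[X (i + 1) | 𝒢 i] ω)) * fun ω ↦ exp (-X (i + 1) ω) := by
    ext ω; simp [sub_eq_add_neg, exp_add]
  have hprod_int : Integrable
      ((fun ω ↦ exp (c * μ[X (i + 1) | 𝒢 i] ω)) * fun ω ↦ exp (-X (i + 1) ω)) μ :=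
    hsplit ▸ .of_bound ((hmeas (i + 1)).mono (𝒢.le _)).aestronglyMeasurable _ (hexp_le (i + 1))
  have hexp_neg_int : Integrable (fun ω ↦ exp (-X (i + 1) ω)) μ := by
    refine .of_bound (continuous_exp.comp_stronglyMeasurable
      ((hadapt _).mono (𝒢.le _)).neg).aestronglyMeasurable 1 (ae_of_all _ fun ω ↦ ?_)
    simp [hX_nonneg]
  rw [hsplit]
  filter_upwards [condExp_mul_of_stronglyMeasurable_left (continuous_exp.comp_stronglyMeasurable
      (stronglyMeasurable_condExp.const_mul c)) hprod_int hexp_neg_int,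
    condExp_exp_neg_of_eq_zero_or_eq_one (𝒢.le i) (hX_int (i + 1)) (hber (i + 1))]
    with ω hpull hbernoulli
  rw [hpull, Pi.mul_apply, hbernoulli]
  exact exp_mul_one_sub_le_one _

end Supermartingale

theorem stmt_6 {Ω : Type*} {m0 : MeasurableSpace Ω} (μ : Measure Ω) [IsProbabilityMeasure μ]
    (𝒢 : Filtration ℕ m0) (X : ℕ → Ω → ℝ) (n : ℕ) (γ : ℝ) (hγ : 0 < γ)
    (hadapt : ∀ i, StronglyMeasurable[𝒢 i] (X i))
    (hber : ∀ i ω, X i ω = 0 ∨ X i ω = 1) :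
    μ {ω | (∑ i ∈ Finset.Icc 1 n, X i ω ≤ n * γ / 2) ∧
        ∀ i ∈ Finset.Icc 1 n, γ ≤ (μ[X i | 𝒢 (i - 1)]) ω} ≤
      ENNReal.ofReal (Real.exp (-(n * γ) / 8)) := by
  set c := 1 - exp (-1)
  set G := fun k ω ↦ ∏ i ∈ Icc 1 k, exp (c * μ[X i | 𝒢 (i - 1)] ω - X i ω)
  have hG : Supermartingale G 𝒢 μ := supermartingale_prod_exp_sub_of_eq_zero_or_eq_one hadapt hber
  have hc : 5 / 8 ≤ c := five_div_eight_le_one_sub_exp_neg_one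
  have hnγ : 0 ≤ n * γ := by positivity
  calc _ ≤ μ {ω | exp ((c - 1 / 2) * (n * γ)) ≤ G n ω} := by
        refine measure_mono fun ω ⟨hsum, hcond⟩ ↦ ?_
        have hcond_sum : n * γ ≤ ∑ i ∈ Icc 1 n, μ[X i | 𝒢 (i - 1)] ω := by
          simpa using card_nsmul_le_sum _ _ _ hcond
        simp only [Set.mem_ofPred_eq, G, ← exp_sum, exp_le_exp, sum_sub_distrib, ← mul_sum]
        nlinarith
    _ ≤ ENNReal.ofReal ((∫ ω, G 0 ω ∂μ) / exp ((c - 1 / 2) * (n * γ))) :=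
      hG.measure_ge_le n.zero_le (ae_of_all _ fun ω ↦ prod_nonneg fun i _ ↦ (exp_pos _).le)
        (exp_pos _)
    _ ≤ ENNReal.ofReal (exp (-(n * γ) / 8)) := by
      have hG0 : ∫ ω, G 0 ω ∂μ = 1 := by simp [G]
      rw [hG0, one_div, ← exp_neg]
      gcongr
      nlinarith
end

section
/- Under the setting of the adapted Bernoulli sequence with conditional means at least γ on the event E_γ, for any λ ∈ (0,2] and δ > 0: P( (∑_{i=1}^n Xᵢ ≤ nγ − (λ/2)nγ − (ln(1/δ))/λ) ∧ E_γ ) ≤ δ. -/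
/-!
Put `c = γ (λ - λ²/2)` and `Yᵢ = exp (c - λ Xᵢ) · 1{γ ≤ E[Xᵢ | F_{i-1}]}`. For a `{0,1}`-valued
`Xᵢ`, `E[exp (-λ Xᵢ) | F_{i-1}] = 1 - (1 - e^{-λ}) E[Xᵢ | F_{i-1}]`, and since
`1 - e^{-λ} ≥ λ - λ²/2` this is at most `e^{-c}` wherever the cutoff is active. Hence the partial
products of the `Yᵢ` form a nonnegative supermartingale started at `1`. On the event in question
every cutoff is active and the product equals `exp (n c - λ ∑ Xᵢ) ≥ 1/δ`, so Markov's inequality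
bounds its probability by `δ`.
-/

open MeasureTheory Real

lemma Real.exp_neg_le_one_sub_add_sq_div_two {x : ℝ} (hx : 0 ≤ x) :
    exp (-x) ≤ 1 - x + x ^ 2 / 2 := by
  let f : ℝ → ℝ := fun y => 1 - y + y ^ 2 / 2 - exp (-y)
  have hf : ∀ y, HasDerivAt f (-1 + y + exp (-y)) y := fun y =>
    ((((hasDerivAt_id' y).const_sub 1).add ((hasDerivAt_pow 2 y).div_const 2)).sub
      (hasDerivAt_neg' y).exp).congr_deriv (by norm_num)
  have hmono : Monotone f := monotone_of_deriv_nonneg (fun y => (hf y).differentiableAt)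
    fun y => by rw [(hf y).deriv]; linarith [add_one_le_exp (-y)]
  have := hmono hx
  simp only [f, neg_zero, exp_zero] at this
  linarith

lemma exp_mul_one_sub_mul_le_one {lam γ p : ℝ} (hlam : 0 ≤ lam) (hγ : 0 ≤ γ) (hp : γ ≤ p) :
    exp (γ * (lam - lam ^ 2 / 2)) * (1 - (1 - exp (-lam)) * p) ≤ 1 := by
  set a := 1 - exp (-lam)
  have ha : lam - lam ^ 2 / 2 ≤ a := by linarith [exp_neg_le_one_sub_add_sq_div_two hlam]
  have ha0 : 0 ≤ a := by linarith [exp_le_one_iff.2 (neg_nonpos.2 hlam)]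
  have hle : 1 - a * p ≤ exp (-(γ * (lam - lam ^ 2 / 2))) := calc
    1 - a * p ≤ 1 - a * γ := by nlinarith
    _ ≤ exp (-(a * γ)) := by linarith [add_one_le_exp (-(a * γ))]
    _ ≤ exp (-(γ * (lam - lam ^ 2 / 2))) := exp_le_exp.2 (by nlinarith)
  calc exp (γ * (lam - lam ^ 2 / 2)) * (1 - a * p)
      ≤ exp (γ * (lam - lam ^ 2 / 2)) * exp (-(γ * (lam - lam ^ 2 / 2))) := by gcongr
    _ = 1 := by rw [← exp_add, add_neg_cancel, exp_zero]

lemma log_one_div_le_of_sum_le {n lam γ δ S : ℝ} (hlam : 0 < lam)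
    (hS : S ≤ n * γ - lam / 2 * (n * γ) - log (1 / δ) / lam) :
    log (1 / δ) ≤ n * (γ * (lam - lam ^ 2 / 2)) - lam * S := by
  have := mul_le_mul_of_nonneg_left hS hlam.le
  rw [mul_sub, mul_div_cancel₀ _ hlam.ne'] at this
  linarith

lemma measure_one_div_le_le_ofReal {Ω : Type*} {m0 : MeasurableSpace Ω} {μ : Measure Ω}
    [IsFiniteMeasure μ] {f : Ω → ℝ} (hf0 : 0 ≤ᵐ[μ] f) (hf : Integrable f μ)
    (hf1 : ∫ ω, f ω ∂μ ≤ 1) {δ : ℝ} (hδ : 0 < δ) :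
    μ {ω | 1 / δ ≤ f ω} ≤ ENNReal.ofReal δ := by
  have hmarkov := (mul_meas_ge_le_integral_of_nonneg hf0 hf (1 / δ)).trans hf1
  rw [one_div_mul_eq_div, div_le_one hδ] at hmarkov
  rw [← ofReal_measureReal]
  exact ENNReal.ofReal_le_ofReal hmarkov

section ExpFactor

variable {Ω : Type*} {m m0 : MeasurableSpace Ω} {μ : Measure Ω} {X : Ω → ℝ} {γ lam : ℝ}

lemma condExp_exp_neg_mul_ae_eq [IsFiniteMeasure μ] (hm : m ≤ m0) (hX : Integrable X μ)
    (hX01 : ∀ ω, X ω = 0 ∨ X ω = 1) (lam : ℝ) :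
    μ[fun ω => exp (-(lam * X ω)) | m] =ᵐ[μ] fun ω => 1 - (1 - exp (-lam)) * μ[X | m] ω := by
  have hlin : (fun ω => exp (-(lam * X ω))) = (fun _ => 1) - (1 - exp (-lam)) • X :=
    funext fun ω => by rcases hX01 ω with h | h <;> simp [h]
  rw [hlin]
  filter_upwards [condExp_sub (integrable_const 1) (hX.smul (1 - exp (-lam))) m,
    condExp_smul (1 - exp (-lam)) X m] with ω hsub hsmul
  rw [hsub, Pi.sub_apply, hsmul, condExp_const hm]
  rfl

/-- The cutoff makes `μ[expFactor m μ X γ lam | m] ≤ 1` hold everywhere, not only where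
`γ ≤ μ[X | m]`. -/
noncomputable def expFactor (m : MeasurableSpace Ω) (μ : Measure[m0] Ω) (X : Ω → ℝ) (γ lam : ℝ) :
    Ω → ℝ :=
  fun ω => exp (γ * (lam - lam ^ 2 / 2) - lam * X ω) * {ω | γ ≤ μ[X | m] ω}.indicator 1 ω

lemma expFactor_nonneg (ω : Ω) : 0 ≤ expFactor m μ X γ lam ω :=
  mul_nonneg (exp_pos _).le (Set.indicator_nonneg (fun _ _ => zero_le_one) ω)

lemma expFactor_le (hlam : 0 ≤ lam) {ω : Ω} (hX : 0 ≤ X ω) :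
    expFactor m μ X γ lam ω ≤ exp (γ * (lam - lam ^ 2 / 2)) := calc
  expFactor m μ X γ lam ω ≤ exp (γ * (lam - lam ^ 2 / 2) - lam * X ω) * 1 :=
    mul_le_mul_of_nonneg_left (Set.indicator_apply_le' (fun _ => le_rfl) fun _ => zero_le_one)
      (exp_pos _).le
  _ ≤ exp (γ * (lam - lam ^ 2 / 2)) := by
    rw [mul_one]
    exact exp_le_exp.2 (by nlinarith)

lemma expFactor_of_le {ω : Ω} (h : γ ≤ μ[X | m] ω) :
    expFactor m μ X γ lam ω = exp (γ * (lam - lam ^ 2 / 2) - lam * X ω) := by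
  simp [expFactor, Set.indicator_of_mem (show ω ∈ {ω | γ ≤ μ[X | m] ω} from h)]

lemma MeasureTheory.StronglyMeasurable.expFactor {m' : MeasurableSpace Ω} (hm : m ≤ m')
    (hX : StronglyMeasurable[m'] X) : StronglyMeasurable[m'] (expFactor m μ X γ lam) :=
  (continuous_exp.comp_stronglyMeasurable (stronglyMeasurable_const.sub (hX.const_mul lam))).mul
    ((stronglyMeasurable_one.indicator
      (stronglyMeasurable_const.measurableSet_le stronglyMeasurable_condExp)).mono hm)

lemma condExp_expFactor_le_one [IsFiniteMeasure μ] (hm : m ≤ m0) (hXm : StronglyMeasurable[m0] X)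
    (hX01 : ∀ ω, X ω = 0 ∨ X ω = 1) (hlam : 0 ≤ lam) (hγ : 0 ≤ γ) :
    μ[expFactor m μ X γ lam | m] ≤ᵐ[μ] 1 := by
  set S := {ω | γ ≤ μ[X | m] ω}
  have hX0 : ∀ ω, 0 ≤ X ω := fun ω => by rcases hX01 ω with h | h <;> simp [h]
  have hsplit : expFactor m μ X γ lam =
      (fun ω => exp (γ * (lam - lam ^ 2 / 2)) * S.indicator 1 ω) * fun ω => exp (-(lam * X ω)) :=
    funext fun ω => by simp only [expFactor, Pi.mul_apply, sub_eq_add_neg, exp_add]; ring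
  have hcut : StronglyMeasurable[m] fun ω => exp (γ * (lam - lam ^ 2 / 2)) * S.indicator 1 ω :=
    stronglyMeasurable_const.mul (stronglyMeasurable_one.indicator
      (stronglyMeasurable_const.measurableSet_le stronglyMeasurable_condExp))
  have hXint : Integrable X μ := .of_bound hXm.aestronglyMeasurable 1 (ae_of_all _ fun ω => by
    rcases hX01 ω with h | h <;> simp [h])
  have hexpint : Integrable (fun ω => exp (-(lam * X ω))) μ :=
    .of_bound (continuous_exp.comp_stronglyMeasurable (hXm.const_mul lam).neg).aestronglyMeasurable
      1 (ae_of_all _ fun ω => by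
        rw [norm_of_nonneg (exp_pos _).le, exp_le_one_iff, neg_nonpos]
        exact mul_nonneg hlam (hX0 ω))
  have hint : Integrable (expFactor m μ X γ lam) μ :=
    .of_bound ((hXm.expFactor hm).aestronglyMeasurable) (exp (γ * (lam - lam ^ 2 / 2)))
      (ae_of_all _ fun ω => by
        rw [norm_of_nonneg (expFactor_nonneg ω)]
        exact expFactor_le hlam (hX0 ω))
  rw [hsplit] at hint ⊢
  filter_upwards [condExp_mul_of_stronglyMeasurable_left hcut hint hexpint,
    condExp_exp_neg_mul_ae_eq hm hXint hX01 lam] with ω h1 h2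
  rw [h1, Pi.mul_apply, h2, Pi.one_apply]
  by_cases hω : ω ∈ S
  · simpa [Set.indicator_of_mem hω] using exp_mul_one_sub_mul_le_one hlam hγ hω
  · simp [Set.indicator_of_notMem hω]

end ExpFactor

theorem supermartingale_prod_Icc_s7 {Ω : Type*} {m0 : MeasurableSpace Ω} {μ : Measure Ω}
    [IsFiniteMeasure μ] {𝒢 : Filtration ℕ m0} {Y : ℕ → Ω → ℝ} {C : ℝ}
    (hY : StronglyAdapted 𝒢 Y) (hY0 : ∀ i ω, 0 ≤ Y i ω) (hYC : ∀ i ω, Y i ω ≤ C)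
    (hcond : ∀ k, μ[Y (k + 1) | 𝒢 k] ≤ᵐ[μ] 1) :
    Supermartingale (fun n ω => ∏ i ∈ Finset.Icc 1 n, Y i ω) 𝒢 μ := by
  set Z : ℕ → Ω → ℝ := fun n ω => ∏ i ∈ Finset.Icc 1 n, Y i ω
  have hZ0 : ∀ n ω, 0 ≤ Z n ω := fun n ω => Finset.prod_nonneg fun i _ => hY0 i ω
  have hZ : StronglyAdapted 𝒢 Z := fun n => Finset.stronglyMeasurable_fun_prod _
    fun i hi => (hY i).mono (𝒢.mono (Finset.mem_Icc.1 hi).2)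
  have hZint : ∀ n, Integrable (Z n) μ := fun n =>
    .of_bound ((hZ n).mono (𝒢.le n)).aestronglyMeasurable (C ^ n) (ae_of_all _ fun ω => calc
      ‖Z n ω‖ = Z n ω := norm_of_nonneg (hZ0 n ω)
      _ ≤ ∏ _ ∈ Finset.Icc 1 n, C := Finset.prod_le_prod (fun i _ => hY0 i ω) fun i _ => hYC i ω
      _ = C ^ n := by simp)
  have hYint : ∀ i, Integrable (Y i) μ := fun i =>
    .of_bound ((hY i).mono (𝒢.le i)).aestronglyMeasurable C
      (ae_of_all _ fun ω => (norm_of_nonneg (hY0 i ω)).trans_le (hYC i ω))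
  refine supermartingale_nat hZ hZint fun k => ?_
  have hsucc : Z (k + 1) = Z k * Y (k + 1) :=
    funext fun ω => Finset.prod_Icc_succ_top (Nat.le_add_left 1 k) _
  rw [hsucc]
  filter_upwards [condExp_mul_of_stronglyMeasurable_left (hZ k) (hsucc ▸ hZint (k + 1))
    (hYint (k + 1)), hcond k] with ω hpull hω
  rw [hpull]
  exact mul_le_of_le_one_right (hZ0 k ω) hω

theorem stmt_7_general {Ω : Type*} {m0 : MeasurableSpace Ω} (μ : Measure Ω) [IsProbabilityMeasure μ]
    (𝒢 : Filtration ℕ m0) (X : ℕ → Ω → ℝ) (n : ℕ) (γ : ℝ) (hγ : 0 < γ)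
    (hadapt : ∀ i, StronglyMeasurable[𝒢 i] (X i))
    (hber : ∀ i ω, X i ω = 0 ∨ X i ω = 1)
    (lam δ : ℝ) (hlam : 0 < lam) (hδ0 : 0 < δ) :
    μ {ω | (∑ i ∈ Finset.Icc 1 n, X i ω ≤
          n * γ - lam / 2 * (n * γ) - Real.log (1 / δ) / lam) ∧
        ∀ i ∈ Finset.Icc 1 n, γ ≤ (μ[X i | 𝒢 (i - 1)]) ω} ≤
      ENNReal.ofReal δ := by
  let Y : ℕ → Ω → ℝ := fun i => expFactor (𝒢 (i - 1)) μ (X i) γ lam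
  have hX0 : ∀ i ω, 0 ≤ X i ω := fun i ω => by rcases hber i ω with h | h <;> simp [h]
  have hsuper : Supermartingale (fun n ω => ∏ i ∈ Finset.Icc 1 n, Y i ω) 𝒢 μ :=
    supermartingale_prod_Icc_s7 (fun i => (hadapt i).expFactor (𝒢.mono (Nat.sub_le i 1)))
      (fun _ _ => expFactor_nonneg _) (fun i ω => expFactor_le hlam.le (hX0 i ω)) fun k => by
        simpa [Y] using condExp_expFactor_le_one (𝒢.le k) ((hadapt (k + 1)).mono (𝒢.le _))
          (hber (k + 1)) hlam.le hγ.le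
  have hint : ∫ ω, ∏ i ∈ Finset.Icc 1 n, Y i ω ∂μ ≤ 1 := by
    simpa using hsuper.setIntegral_le (Nat.zero_le n) MeasurableSet.univ
  refine (measure_mono fun ω (hω : _ ∧ _) => ?_).trans (measure_one_div_le_le_ofReal
    (ae_of_all _ fun ω => Finset.prod_nonneg fun i _ => expFactor_nonneg ω)
    (hsuper.integrable n) hint hδ0)
  calc 1 / δ = exp (log (1 / δ)) := (exp_log (by positivity)).symm
    _ ≤ exp (n * (γ * (lam - lam ^ 2 / 2)) - lam * ∑ i ∈ Finset.Icc 1 n, X i ω) :=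
      exp_le_exp.2 (log_one_div_le_of_sum_le hlam hω.1)
    _ = ∏ i ∈ Finset.Icc 1 n, Y i ω := by
      rw [Finset.prod_congr rfl fun i hi => expFactor_of_le (hω.2 i hi), ← exp_sum,
        Finset.sum_sub_distrib, Finset.sum_const, Nat.card_Icc, ← Finset.mul_sum]
      simp

theorem stmt_7 {Ω : Type*} {m0 : MeasurableSpace Ω} (μ : Measure Ω) [IsProbabilityMeasure μ]
    (𝒢 : Filtration ℕ m0) (X : ℕ → Ω → ℝ) (n : ℕ) (γ : ℝ) (hγ : 0 < γ)
    (hadapt : ∀ i, StronglyMeasurable[𝒢 i] (X i))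
    (hber : ∀ i ω, X i ω = 0 ∨ X i ω = 1)
    (lam δ : ℝ) (hlam : 0 < lam) (hlam2 : lam ≤ 2) (hδ0 : 0 < δ) (hδ1 : δ < 1) :
    μ {ω | (∑ i ∈ Finset.Icc 1 n, X i ω ≤
          n * γ - lam / 2 * (n * γ) - Real.log (1 / δ) / lam) ∧
        ∀ i ∈ Finset.Icc 1 n, γ ≤ (μ[X i | 𝒢 (i - 1)]) ω} ≤
      ENNReal.ofReal δ :=
  stmt_7_general μ 𝒢 X n γ hγ hadapt hber lam δ hlam hδ0
end
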